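/- Let F₃ be the 2-dimensional simplicial complex on vertex set {1,2,3,4,5,6} whose maximal edges are {1,2,3}, {4,5,6}, {1,4}, {1,5}, {2,4}, {2,5}. Then F₃ is non-trivial, and ex(n,F₃) = Θ(n³); that is, there exist constants c, C > 0 such that c·n³ ≤ ex(n,F₃) ≤ C·n³ for all sufficiently large n. -/

import Mathlib

open Filter Asymptotics

/-- A finite hypergraph with vertices in `ℕ`. -/
structure NHypergraph where
  verts : Finset ℕ
  edges : Finset (Finset ℕ)
  subset_verts : ∀ e ∈ edges, e ⊆ verts

namespace NHypergraph

/-- `G` is `k`-uniform if every edge has exactly `k` vertices. -/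
def IsUniform (G : NHypergraph) (k : ℕ) : Prop := ∀ e ∈ G.edges, e.card = k

/-- `H` contains a copy of `F`: an injection of `V(F)` into `V(H)` mapping
every edge of `F` to an edge of `H`. -/
def ContainsCopy (H F : NHypergraph) : Prop :=
  ∃ f : ℕ → ℕ, Set.InjOn f ↑F.verts ∧ (∀ v ∈ F.verts, f v ∈ H.verts) ∧
    ∀ e ∈ F.edges, e.image f ∈ H.edges

/-- `F` is isomorphic to `G`. -/
def IsIsoTo (F G : NHypergraph) : Prop :=
  ∃ f : ℕ → ℕ, Set.InjOn f ↑F.verts ∧ F.verts.image f = G.verts ∧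
    F.edges.image (Finset.image f) = G.edges

/-- The `s`-th layer `F^s`: the `s`-uniform hypergraph on `V(F)` consisting of all
`s`-element edges of `F`. -/
def layer (F : NHypergraph) (s : ℕ) : NHypergraph where
  verts := F.verts
  edges := F.edges.filter fun e => e.card = s
  subset_verts := fun e he => F.subset_verts e (Finset.mem_filter.mp he).1

/-- The set of maximal edges (the generating set) of `F`. -/
def maximalEdges (F : NHypergraph) : Finset (Finset ℕ) :=
  F.edges.filter fun e => ∀ e' ∈ F.edges, e ⊆ e' → e = e'

/-- `T` forms a clique in the `k`-uniform hypergraph `G`: `T` is a singleton,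
`T` is a subset of some edge, or every `k`-element subset of `T` is an edge. -/
def IsCliqueIn (G : NHypergraph) (k : ℕ) (T : Finset ℕ) : Prop :=
  T ⊆ G.verts ∧ (T.card = 1 ∨ (∃ e ∈ G.edges, T ⊆ e) ∨
    ∀ S ∈ T.powersetCard k, S ∈ G.edges)

/-- The number of cliques in `G` (viewed as a `k`-uniform hypergraph). -/
noncomputable def cliqueCount (G : NHypergraph) (k : ℕ) : ℕ :=
  Set.ncard {T : Finset ℕ | G.IsCliqueIn k T}

/-- The number of cliques of order at least `k` in `G`. -/
noncomputable def cliquePlusCount (G : NHypergraph) (k : ℕ) : ℕ :=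
  Set.ncard {T : Finset ℕ | G.IsCliqueIn k T ∧ k ≤ T.card}

/-- `F` is `d`-dimensional: the maximum edge size is `d + 1`. -/
def IsDimensional (F : NHypergraph) (d : ℕ) : Prop :=
  (∀ e ∈ F.edges, e.card ≤ d + 1) ∧ ∃ e ∈ F.edges, e.card = d + 1

/-- `H` is edge-degenerate: its edges can be ordered `e₁, …, eₘ` so that for every
`i ≥ 2` there is `j < i` with `eᵢ ∩ (e₁ ∪ ⋯ ∪ e_{i-1}) ⊆ eⱼ`. -/
def EdgeDegenerate (H : NHypergraph) : Prop :=
  ∃ l : List (Finset ℕ), l.Nodup ∧ l.toFinset = H.edges ∧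
    ∀ i : Fin l.length, 1 ≤ (i : ℕ) →
      ∃ j : Fin l.length, (j : ℕ) < (i : ℕ) ∧
        l.get i ∩ (l.take (i : ℕ)).foldr (· ∪ ·) ∅ ⊆ l.get j

/-- `G` is `l`-full (as a `k`-uniform hypergraph): every `(k-1)`-element vertex subset
is contained in either none or at least `l` edges. -/
def IsFull (G : NHypergraph) (l k : ℕ) : Prop :=
  ∀ S ⊆ G.verts, S.card = k - 1 →
    (G.edges.filter fun e => S ⊆ e) = ∅ ∨ l ≤ (G.edges.filter fun e => S ⊆ e).card

end NHypergraph

/-- An abstract simplicial complex: contains the empty edge, all singletons of its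
vertex set, and is closed under taking subsets. -/
def IsSimplicialComplex (H : NHypergraph) : Prop :=
  ∅ ∈ H.edges ∧ (∀ v ∈ H.verts, {v} ∈ H.edges) ∧
    ∀ e ∈ H.edges, ∀ e', e' ⊆ e → e' ∈ H.edges

/-- `𝓓(H)`: the simplicial complex on `V(H)` whose edges are all singletons together
with all subsets of edges of `H`. -/
def downClosure (H : NHypergraph) : NHypergraph where
  verts := H.verts
  edges := insert ∅ ((H.verts.image fun v => ({v} : Finset ℕ)) ∪
    H.edges.biUnion Finset.powerset)
  subset_verts := by
    intro e he
    simp only [Finset.mem_insert, Finset.mem_union, Finset.mem_image, Finset.mem_biUnion,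
      Finset.mem_powerset] at he
    rcases he with rfl | ⟨v, hv, rfl⟩ | ⟨a, ha, hea⟩
    · exact Finset.empty_subset _
    · exact Finset.singleton_subset_iff.mpr hv
    · exact hea.trans (H.subset_verts a ha)

/-- The simplicial complex generated by a finite family `E` of edges: its vertex set is
the union of the members of `E` and its edges are all subsets of members of `E`. -/
def genComplex (E : Finset (Finset ℕ)) : NHypergraph where
  verts := E.sup id
  edges := insert ∅ (E.biUnion Finset.powerset)
  subset_verts := by
    intro e he
    simp only [Finset.mem_insert, Finset.mem_biUnion, Finset.mem_powerset] at he
    rcases he with rfl | ⟨a, ha, hea⟩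
    · exact Finset.empty_subset _
    · intro x hx
      exact Finset.mem_sup.mpr ⟨a, ha, hea hx⟩

/-- `ex(n, F)`: the maximum number of edges in an `F`-free simplicial complex
on `n` vertices. -/
noncomputable def exSC (n : ℕ) (F : NHypergraph) : ℕ :=
  sSup {m | ∃ H : NHypergraph, IsSimplicialComplex H ∧ H.verts.card = n ∧
    ¬ H.ContainsCopy F ∧ H.edges.card = m}

/-- `ex_k^{cl}(n, 𝓗)`: the maximum number of cliques in an `n`-vertex `k`-uniform
hypergraph containing no copy of any member of `𝓗`. -/
noncomputable def exCl (k n : ℕ) (HF : Set NHypergraph) : ℕ :=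
  sSup {m | ∃ G : NHypergraph, G.IsUniform k ∧ G.verts.card = n ∧
    (∀ H ∈ HF, ¬ G.ContainsCopy H) ∧ G.cliqueCount k = m}

/-- `ex_k^{cl+}(n, 𝓗)`: the maximum number of cliques of order at least `k` in an
`n`-vertex `k`-uniform hypergraph containing no copy of any member of `𝓗`. -/
noncomputable def exClPlus (k n : ℕ) (HF : Set NHypergraph) : ℕ :=
  sSup {m | ∃ G : NHypergraph, G.IsUniform k ∧ G.verts.card = n ∧
    (∀ H ∈ HF, ¬ G.ContainsCopy H) ∧ G.cliquePlusCount k = m}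

/-- `N(T, G)`: the number of copies of `T` in `G`, i.e. the number of subhypergraphs
of `G` (given by a vertex set and an edge set) that are images of `T` under an injection. -/
noncomputable def copyCount (T G : NHypergraph) : ℕ :=
  Set.ncard {p : Finset ℕ × Finset (Finset ℕ) |
    ∃ f : ℕ → ℕ, Set.InjOn f ↑T.verts ∧ (∀ v ∈ T.verts, f v ∈ G.verts) ∧
      (∀ e ∈ T.edges, e.image f ∈ G.edges) ∧
      T.verts.image f = p.1 ∧ T.edges.image (Finset.image f) = p.2}

/-- `ex_k(n, T, 𝓗)`: the maximum number of copies of `T` in an `n`-vertex `k`-uniform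
hypergraph containing no copy of any member of `𝓗`. -/
noncomputable def exGen (k n : ℕ) (T : NHypergraph) (HF : Set NHypergraph) : ℕ :=
  sSup {m | ∃ G : NHypergraph, G.IsUniform k ∧ G.verts.card = n ∧
    (∀ H ∈ HF, ¬ G.ContainsCopy H) ∧ copyCount T G = m}

/-- A `(k-1)`-dimensional simplicial complex `F` is trivial if for all sufficiently
large `n`, `ex(n,F) = ex_k^{cl+}(n, F^k) + ∑_{r=0}^{k-1} C(n,r)`. -/
def IsTrivialSC (k : ℕ) (F : NHypergraph) : Prop :=
  ∀ᶠ n in atTop, exSC n F = exClPlus k n {F.layer k} + ∑ r ∈ Finset.range k, n.choose r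

/-- The `k`-uniform matching `M^k_t` with `t` pairwise disjoint edges. -/
def matchingHG (k t : ℕ) : NHypergraph where
  verts := Finset.range (t * k)
  edges := (Finset.range t).image fun i => (Finset.range k).image fun j => i * k + j
  subset_verts := by
    intro e he
    simp only [Finset.mem_image, Finset.mem_range] at he
    obtain ⟨i, hi, rfl⟩ := he
    intro x hx
    simp only [Finset.mem_image, Finset.mem_range] at hx
    obtain ⟨j, hj, rfl⟩ := hx
    simp only [Finset.mem_range]
    calc i * k + j < i * k + k := by omega
      _ = (i + 1) * k := by ring
      _ ≤ t * k := Nat.mul_le_mul (by omega) le_rfl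

/-- The `i`-th edge of the `k`-uniform linear cycle of length `t`. -/
def cycleEdge (k t i : ℕ) : Finset ℕ :=
  (Finset.range k).image fun j => (i * (k - 1) + j) % (t * (k - 1))

/-- The `k`-uniform linear cycle `C^k_t` of length `t`. -/
def linearCycleHG (k t : ℕ) : NHypergraph where
  verts := (Finset.range t).sup (cycleEdge k t)
  edges := (Finset.range t).image (cycleEdge k t)
  subset_verts := by
    intro e he
    simp only [Finset.mem_image] at he
    obtain ⟨i, hi, rfl⟩ := he
    intro x hx
    exact Finset.mem_sup.mpr ⟨i, hi, hx⟩

/-- The `k`-uniform linear path `P^k_t` of length `t` (obtained from `C^k_{t+1}` by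
deleting one edge). -/
def linearPathHG (k t : ℕ) : NHypergraph where
  verts := (Finset.range t).sup (cycleEdge k (t + 1))
  edges := (Finset.range t).image (cycleEdge k (t + 1))
  subset_verts := by
    intro e he
    simp only [Finset.mem_image] at he
    obtain ⟨i, hi, rfl⟩ := he
    intro x hx
    exact Finset.mem_sup.mpr ⟨i, hi, hx⟩

/-- The `k`-uniform tight path `TP^k_t` of length `t`, on vertices `{0, …, k+t-2}`. -/
def tightPathHG (k t : ℕ) : NHypergraph where
  verts := Finset.range (k + t - 1)
  edges := (Finset.range t).image fun i => (Finset.range k).image fun j => i + j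
  subset_verts := by
    intro e he
    simp only [Finset.mem_image, Finset.mem_range] at he
    obtain ⟨i, hi, rfl⟩ := he
    intro x hx
    simp only [Finset.mem_image, Finset.mem_range] at hx
    obtain ⟨j, hj, rfl⟩ := hx
    simp only [Finset.mem_range]
    omega

/-- The complete `k`-uniform hypergraph `K^k_r` on `r` vertices. -/
def completeHG (k r : ℕ) : NHypergraph where
  verts := Finset.range r
  edges := (Finset.range r).powersetCard k
  subset_verts := fun _ he => (Finset.mem_powersetCard.mp he).1

/-- The star `S^k_{n,l}`: the `n`-vertex `k`-uniform hypergraph whose edges are all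
`k`-element subsets meeting a fixed set of `l` vertices. -/
def starHG (k n l : ℕ) : NHypergraph where
  verts := Finset.range n
  edges := ((Finset.range n).powersetCard k).filter fun e => ∃ v ∈ e, v < l
  subset_verts := fun _ he => (Finset.mem_powersetCard.mp (Finset.mem_filter.mp he).1).1


def F3 : NHypergraph := genComplex {({1,2,3} : Finset ℕ), {4,5,6}, {1,4}, {1,5}, {2,4}, {2,5}}

lemma F3_verts : F3.verts = {1,2,3,4,5,6} := by decide

lemma F3_edges_cases : ∀ e ∈ F3.edges, e = ∅ ∨ e ⊆ {1,2,3} ∨ e ⊆ ({4,5,6} : Finset ℕ) ∨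
    e ⊆ {1,4} ∨ e ⊆ {1,5} ∨ e ⊆ {2,4} ∨ e ⊆ {2,5} := by decide

lemma copy_of_F3 {H : NHypergraph} (hsc : IsSimplicialComplex H)
    {v1 v2 v3 v4 v5 v6 : ℕ}
    (hd : [v1,v2,v3,v4,v5,v6].Nodup)
    (h123 : {v1,v2,v3} ∈ H.edges) (h456 : {v4,v5,v6} ∈ H.edges)
    (h14 : {v1,v4} ∈ H.edges) (h15 : {v1,v5} ∈ H.edges)
    (h24 : {v2,v4} ∈ H.edges) (h25 : {v2,v5} ∈ H.edges) :
    H.ContainsCopy F3 := by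
  simp only [List.nodup_cons, List.mem_cons, List.mem_singleton, List.nodup_nil, and_true,
    not_or, List.not_mem_nil, or_false] at hd
  obtain ⟨⟨h12, h13, h14', h15', h16⟩, ⟨h23, h24', h25', h26⟩, ⟨h34, h35, h36⟩, ⟨h45, h46⟩, h56⟩ := hd
  have hv1 : v1 ∈ H.verts := H.subset_verts _ h123 (by simp)
  have hv2 : v2 ∈ H.verts := H.subset_verts _ h123 (by simp)
  have hv3 : v3 ∈ H.verts := H.subset_verts _ h123 (by simp)
  have hv4 : v4 ∈ H.verts := H.subset_verts _ h456 (by simp)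
  have hv5 : v5 ∈ H.verts := H.subset_verts _ h456 (by simp)
  have hv6 : v6 ∈ H.verts := H.subset_verts _ h456 (by simp)
  refine ⟨fun x => if x = 1 then v1 else if x = 2 then v2 else if x = 3 then v3
    else if x = 4 then v4 else if x = 5 then v5 else if x = 6 then v6 else 0, ?_, ?_, ?_⟩
  · intro a ha b hb hab
    rw [F3_verts] at ha hb
    simp only [Finset.coe_insert, Set.mem_insert_iff, Finset.coe_singleton,
      Set.mem_singleton_iff] at ha hb
    rcases ha with rfl|rfl|rfl|rfl|rfl|rfl <;> rcases hb with rfl|rfl|rfl|rfl|rfl|rfl <;>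
      simp_all
  · intro v hv
    rw [F3_verts] at hv
    fin_cases hv <;> simpa
  · intro e he
    rcases F3_edges_cases e he with rfl | h | h | h | h | h | h
    · simpa using hsc.1
    · refine hsc.2.2 _ h123 _ ?_
      refine (Finset.image_subset_image h).trans ?_
      simp [Finset.image_insert]
    · refine hsc.2.2 _ h456 _ ?_
      refine (Finset.image_subset_image h).trans ?_
      simp [Finset.image_insert]
    · refine hsc.2.2 _ h14 _ ?_
      refine (Finset.image_subset_image h).trans ?_
      simp [Finset.image_insert]
    · refine hsc.2.2 _ h15 _ ?_
      refine (Finset.image_subset_image h).trans ?_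
      simp [Finset.image_insert]
    · refine hsc.2.2 _ h24 _ ?_
      refine (Finset.image_subset_image h).trans ?_
      simp [Finset.image_insert]
    · refine hsc.2.2 _ h25 _ ?_
      refine (Finset.image_subset_image h).trans ?_
      simp [Finset.image_insert]
set_option maxHeartbeats 1000000
lemma M2_edges_cases : ∀ e ∈ (F3.layer 3).edges, e = ({1,2,3} : Finset ℕ) ∨ e = {4,5,6} := by
  decide

lemma M2_verts : (F3.layer 3).verts = {1,2,3,4,5,6} := by decide

lemma copy_of_M2 {G : NHypergraph} {e1 e2 : Finset ℕ} (h1 : e1 ∈ G.edges) (h2 : e2 ∈ G.edges)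
    (c1 : e1.card = 3) (c2 : e2.card = 3) (hdisj : Disjoint e1 e2) :
    G.ContainsCopy (F3.layer 3) := by
  obtain ⟨x, y, z, hxy, hxz, hyz, rfl⟩ := Finset.card_eq_three.mp c1
  obtain ⟨u, v, w, huv, huw, hvw, rfl⟩ := Finset.card_eq_three.mp c2
  have hcr : ∀ a ∈ ({x,y,z} : Finset ℕ), ∀ b ∈ ({u,v,w} : Finset ℕ), a ≠ b := by
    intro a ha b hb
    exact fun h => Finset.disjoint_left.mp hdisj ha (h ▸ hb)
  have hxu := hcr x (by simp) u (by simp)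
  have hxv := hcr x (by simp) v (by simp)
  have hxw := hcr x (by simp) w (by simp)
  have hyu := hcr y (by simp) u (by simp)
  have hyv := hcr y (by simp) v (by simp)
  have hyw := hcr y (by simp) w (by simp)
  have hzu := hcr z (by simp) u (by simp)
  have hzv := hcr z (by simp) v (by simp)
  have hzw := hcr z (by simp) w (by simp)
  have gx : x ∈ G.verts := G.subset_verts _ h1 (by simp)
  have gy : y ∈ G.verts := G.subset_verts _ h1 (by simp)
  have gz : z ∈ G.verts := G.subset_verts _ h1 (by simp)
  have gu : u ∈ G.verts := G.subset_verts _ h2 (by simp)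
  have gv : v ∈ G.verts := G.subset_verts _ h2 (by simp)
  have gw : w ∈ G.verts := G.subset_verts _ h2 (by simp)
  refine ⟨fun t => if t = 1 then x else if t = 2 then y else if t = 3 then z
    else if t = 4 then u else if t = 5 then v else if t = 6 then w else 0, ?_, ?_, ?_⟩
  · intro a ha b hb hab
    rw [M2_verts] at ha hb
    simp only [Finset.coe_insert, Set.mem_insert_iff, Finset.coe_singleton,
      Set.mem_singleton_iff] at ha hb
    rcases ha with rfl|rfl|rfl|rfl|rfl|rfl <;> rcases hb with rfl|rfl|rfl|rfl|rfl|rfl <;>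
      simp_all
  · intro t ht
    rw [M2_verts] at ht
    fin_cases ht <;> simpa
  · intro e he
    rcases M2_edges_cases e he with rfl | rfl
    · convert h1 using 1
      simp [Finset.image_insert]
    · convert h2 using 1
      simp [Finset.image_insert]
open Classical in
noncomputable def pickVert (E : Finset (Finset ℕ)) (e : Finset ℕ) : ℕ :=
  if h : ∃ v ∈ e, (E.filter (fun e' => v ∈ e')).card = 1 then h.choose
  else if h' : ∃ x, x ∉ e ∧ ∀ c ∈ e, {c, x} ∈ E then h'.choose else 0

lemma card_le_of_noP4 (E : Finset (Finset ℕ)) (h2 : ∀ e ∈ E, e.card = 2)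
    (hP : ∀ x y z w : ℕ, x ≠ y → x ≠ z → x ≠ w → y ≠ z → y ≠ w → z ≠ w →
      {x,y} ∈ E → {y,z} ∈ E → {z,w} ∈ E → False) :
    E.card ≤ (E.sup id).card := by
  classical
  set deg : ℕ → ℕ := fun v => (E.filter (fun e' => v ∈ e')).card with hdeg
  have other : ∀ e' ∈ E, ∀ c ∈ e', ∃ x, x ≠ c ∧ e' = {c, x} := by
    intro e' he' c hc
    obtain ⟨u, v, huv, rfl⟩ := Finset.card_eq_two.mp (h2 e' he')
    rcases Finset.mem_insert.mp hc with rfl | h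
    · exact ⟨v, huv.symm, rfl⟩
    · rw [Finset.mem_singleton] at h
      subst h
      exact ⟨u, huv, Finset.pair_comm u c⟩
  have key : ∀ e ∈ E, ¬ (∃ v ∈ e, deg v = 1) →
      ∃ x, x ∉ e ∧ ∀ c ∈ e, {c, x} ∈ E := by
    intro e he hnl
    push_neg at hnl
    obtain ⟨c, d, hcd, rfl⟩ := Finset.card_eq_two.mp (h2 e he)
    have getnbr : ∀ a ∈ ({c, d} : Finset ℕ), ∃ x, x ∉ ({c, d} : Finset ℕ) ∧ {a, x} ∈ E := by
      intro a ha
      have h1 : ({c, d} : Finset ℕ) ∈ E.filter (fun e' => a ∈ e') :=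
        Finset.mem_filter.mpr ⟨he, ha⟩
      have hge : 2 ≤ deg a := by
        rcases Nat.lt_or_ge (deg a) 2 with h | h
        · interval_cases hda : deg a
          · exact absurd (Finset.card_eq_zero.mp hda ▸ h1) (Finset.notMem_empty _)
          · exact absurd hda (hnl a ha)
        · exact h
      obtain ⟨p, hp, q, hq, hpq⟩ := Finset.one_lt_card.mp hge
      have hex : ∃ e' ∈ E.filter (fun e' => a ∈ e'), e' ≠ ({c, d} : Finset ℕ) := by
        rcases eq_or_ne p ({c, d} : Finset ℕ) with rfl | hne
        · exact ⟨q, hq, fun h => hpq h.symm⟩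
        · exact ⟨p, hp, hne⟩
      obtain ⟨e', he', hne⟩ := hex
      rw [Finset.mem_filter] at he'
      obtain ⟨x, hxa, hex'⟩ := other e' he'.1 a he'.2
      refine ⟨x, ?_, hex' ▸ he'.1⟩
      intro hx
      simp only [Finset.mem_insert, Finset.mem_singleton] at hx ha
      rcases ha with rfl | rfl <;> rcases hx with rfl | rfl
      · exact hxa rfl
      · exact hne hex'
      · exact hne (hex'.trans (Finset.pair_comm _ _))
      · exact hxa rfl
    obtain ⟨x, hxcd, hcx⟩ := getnbr c (by simp)
    obtain ⟨y, hycd, hdy⟩ := getnbr d (by simp)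
    have hxc : x ≠ c := fun h => hxcd (by simp [h])
    have hxd : x ≠ d := fun h => hxcd (by simp [h])
    have hyc : y ≠ c := fun h => hycd (by simp [h])
    have hyd : y ≠ d := fun h => hycd (by simp [h])
    have hxy : x = y := by
      by_contra hxy
      exact hP x c d y hxc hxd hxy hcd hyc.symm hyd.symm
        (Finset.pair_comm c x ▸ hcx) he (Finset.pair_comm d y ▸ hdy)
    subst hxy
    refine ⟨x, hxcd, ?_⟩
    intro a ha
    rcases Finset.mem_insert.mp ha with rfl | ha'
    · exact hcx
    · rw [Finset.mem_singleton] at ha'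
      subst ha'
      exact hdy
  -- degree of a common neighbor is at least 2
  have degnbr : ∀ e ∈ E, ∀ x, x ∉ e → (∀ c ∈ e, {c, x} ∈ E) → 2 ≤ deg x := by
    intro e he x hx hall
    obtain ⟨c, d, hcd, rfl⟩ := Finset.card_eq_two.mp (h2 e he)
    have h1 : ({c, x} : Finset ℕ) ∈ E.filter (fun e' => x ∈ e') :=
      Finset.mem_filter.mpr ⟨hall c (by simp), by simp⟩
    have h2' : ({d, x} : Finset ℕ) ∈ E.filter (fun e' => x ∈ e') :=
      Finset.mem_filter.mpr ⟨hall d (by simp), by simp⟩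
    refine Finset.one_lt_card.mpr ⟨_, h1, _, h2', ?_⟩
    intro hcontra
    have : c ∈ ({d, x} : Finset ℕ) := hcontra ▸ (by simp : c ∈ ({c, x} : Finset ℕ))
    rcases Finset.mem_insert.mp this with rfl | h
    · exact hcd rfl
    · rw [Finset.mem_singleton] at h
      exact hx (by simp [h])
  apply Finset.card_le_card_of_injOn (pickVert E)
  · intro e he
    by_cases h : ∃ v ∈ e, deg v = 1
    · have : pickVert E e = h.choose := dif_pos h
      rw [this]
      exact Finset.mem_sup.mpr ⟨e, he, h.choose_spec.1⟩
    · have h' := key e he h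
      have heq : pickVert E e = h'.choose := by
        unfold pickVert
        rw [dif_neg h, dif_pos h']
      rw [heq]
      obtain ⟨hx, hall⟩ := h'.choose_spec
      have hne : e.Nonempty := Finset.card_pos.mp (by rw [h2 e he]; norm_num)
      obtain ⟨c, hc⟩ := hne
      exact Finset.mem_sup.mpr ⟨{c, h'.choose}, hall c hc, by simp⟩
  · intro e1 he1 e2 he2 heq
    simp only [Finset.mem_coe] at he1 he2
    by_cases h1 : ∃ v ∈ e1, deg v = 1 <;> by_cases hh2 : ∃ v ∈ e2, deg v = 1
    · have hq1 : pickVert E e1 = h1.choose := dif_pos h1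
      have hq2 : pickVert E e2 = hh2.choose := dif_pos hh2
      rw [hq1, hq2] at heq
      obtain ⟨hv1, hd1⟩ := h1.choose_spec
      obtain ⟨hv2, hd2⟩ := hh2.choose_spec
      have m1 : e1 ∈ E.filter (fun e' => h1.choose ∈ e') := Finset.mem_filter.mpr ⟨he1, hv1⟩
      have m2 : e2 ∈ E.filter (fun e' => h1.choose ∈ e') :=
        Finset.mem_filter.mpr ⟨he2, heq ▸ hv2⟩
      exact Finset.card_le_one.mp (le_of_eq hd1) _ m1 _ m2
    · exfalso
      have h2' := key e2 he2 hh2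
      have hq1 : pickVert E e1 = h1.choose := dif_pos h1
      rw [hq1] at heq
      have heq2 : pickVert E e2 = h2'.choose := by
        unfold pickVert
        rw [dif_neg hh2, dif_pos h2']
      rw [heq2] at heq
      have := degnbr e2 he2 h2'.choose h2'.choose_spec.1 h2'.choose_spec.2
      rw [← heq] at this
      rw [h1.choose_spec.2] at this
      omega
    · exfalso
      have h1' := key e1 he1 h1
      have hq2 : pickVert E e2 = hh2.choose := dif_pos hh2
      rw [hq2] at heq
      have heq1 : pickVert E e1 = h1'.choose := by
        unfold pickVert
        rw [dif_neg h1, dif_pos h1']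
      rw [heq1] at heq
      have := degnbr e1 he1 h1'.choose h1'.choose_spec.1 h1'.choose_spec.2
      rw [heq] at this
      rw [hh2.choose_spec.2] at this
      omega
    · have h1' := key e1 he1 h1
      have h2' := key e2 he2 hh2
      have heq1 : pickVert E e1 = h1'.choose := by
        unfold pickVert
        rw [dif_neg h1, dif_pos h1']
      have heq2 : pickVert E e2 = h2'.choose := by
        unfold pickVert
        rw [dif_neg hh2, dif_pos h2']
      rw [heq1, heq2] at heq
      obtain ⟨hx1, hall1⟩ := h1'.choose_spec
      obtain ⟨hx2, hall2⟩ := h2'.choose_spec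
      set x := h1'.choose with hxdef
      by_contra hne
      have hsub : ∃ u ∈ e2, u ∉ e1 := by
        by_contra hsub
        push_neg at hsub
        exact hne (Finset.eq_of_subset_of_card_le hsub (by rw [h2 e1 he1, h2 e2 he2])).symm
      obtain ⟨u, hu2, hu1⟩ := hsub
      obtain ⟨c, d, hcd, he1eq⟩ := Finset.card_eq_two.mp (h2 e1 he1)
      have hxc : x ≠ c := fun h => hx1 (by rw [he1eq]; simp [h])
      have hxd : x ≠ d := fun h => hx1 (by rw [he1eq]; simp [h])
      have hux : u ≠ x := fun h => hx2 (by rw [← heq, ← h]; exact hu2)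
      have huc : u ≠ c := fun h => hu1 (by rw [he1eq]; simp [h])
      have hud : u ≠ d := fun h => hu1 (by rw [he1eq]; simp [h])
      have eux : ({u, x} : Finset ℕ) ∈ E := by
        have := hall2 u hu2
        rwa [← heq] at this
      have exc : ({x, c} : Finset ℕ) ∈ E := by
        have := hall1 c (by rw [he1eq]; simp)
        rwa [Finset.pair_comm] at this
      have ecd : ({c, d} : Finset ℕ) ∈ E := he1eq ▸ he1
      exact hP u x c d hux huc hud hxc hxd hcd eux exc ecd
noncomputable def pickMax (e : Finset ℕ) : ℕ := if h : e.Nonempty then e.max' h else 0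

lemma pickMax_mem {e : Finset ℕ} (h : e.Nonempty) : pickMax e ∈ e := by
  unfold pickMax
  rw [dif_pos h]
  exact e.max'_mem h

lemma exists_four {q : Finset ℕ} (h : q.card = 4) :
    ∃ a b c d : ℕ, a ≠ b ∧ a ≠ c ∧ a ≠ d ∧ b ≠ c ∧ b ≠ d ∧ c ≠ d ∧
      q = insert a (insert b {c, d}) := by
  obtain ⟨a, q3, ha3, rfl, h3⟩ := Finset.card_eq_succ.mp h
  obtain ⟨b, c, d, hbc, hbd, hcd, rfl⟩ := Finset.card_eq_three.mp h3
  simp only [Finset.mem_insert, Finset.mem_singleton, not_or] at ha3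
  exact ⟨a, b, c, d, ha3.1, ha3.2.1, ha3.2.2, hbc, hbd, hcd, rfl⟩

lemma exists_six {S : Finset ℕ} (h : S.card = 6) :
    ∃ a b c d e f : ℕ, [a, b, c, d, e, f].Nodup ∧
      S = insert a (insert b (insert c (insert d {e, f}))) := by
  obtain ⟨a, S5, ha5, rfl, h5⟩ := Finset.card_eq_succ.mp h
  obtain ⟨b, S4, hb4, rfl, h4⟩ := Finset.card_eq_succ.mp h5
  obtain ⟨c, d, e, f, hcd, hce, hcf, hde, hdf, hef, rfl⟩ := exists_four h4
  simp only [Finset.mem_insert, Finset.mem_singleton, not_or] at ha5 hb4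
  refine ⟨a, b, c, d, e, f, ?_, rfl⟩
  simp only [List.nodup_cons, List.mem_cons, List.mem_singleton, List.nodup_nil, and_true,
    not_or, List.not_mem_nil]
  tauto

lemma card_le_five {H : NHypergraph} (hsc : IsSimplicialComplex H)
    (hfree : ¬ H.ContainsCopy F3) : ∀ e ∈ H.edges, e.card ≤ 5 := by
  intro e he
  by_contra hcard
  push_neg at hcard
  obtain ⟨S, hSe, hS6⟩ := Finset.exists_subset_card_eq (show 6 ≤ e.card by omega)
  have hS : S ∈ H.edges := hsc.2.2 e he S hSe
  obtain ⟨a, b, c, d, e', f, hnd, rfl⟩ := exists_six hS6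
  refine hfree (copy_of_F3 hsc hnd ?_ ?_ ?_ ?_ ?_ ?_) <;>
    exact hsc.2.2 _ hS _ (by intro t ht; simp only [Finset.mem_insert, Finset.mem_singleton] at ht ⊢; tauto)

lemma no_two_five {H : NHypergraph} (hsc : IsSimplicialComplex H)
    (hfree : ¬ H.ContainsCopy F3) {q : Finset ℕ} (hq : q.card = 4) {m1 m2 : ℕ}
    (hm1 : m1 ∉ q) (hm2 : m2 ∉ q) (hm12 : m1 ≠ m2)
    (h1 : insert m1 q ∈ H.edges) (h2 : insert m2 q ∈ H.edges) : False := by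
  obtain ⟨a, b, c, d, hab, hac, had, hbc, hbd, hcd, rfl⟩ := exists_four hq
  simp only [Finset.mem_insert, Finset.mem_singleton, not_or] at hm1 hm2
  refine hfree (copy_of_F3 hsc (v1 := a) (v2 := b) (v3 := m1) (v4 := c) (v5 := d) (v6 := m2)
    ?_ ?_ ?_ ?_ ?_ ?_ ?_)
  · simp only [List.nodup_cons, List.mem_cons, List.mem_singleton, List.nodup_nil, and_true,
      not_or, List.not_mem_nil]
    refine ⟨⟨hab, ?_, hac, had, ?_⟩, ⟨?_, hbc, hbd, ?_⟩, ?_, ⟨hcd, ?_⟩, ?_⟩ <;> tauto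
  · exact hsc.2.2 _ h1 _ (by intro t ht; simp only [Finset.mem_insert, Finset.mem_singleton] at ht ⊢; tauto)
  · exact hsc.2.2 _ h2 _ (by intro t ht; simp only [Finset.mem_insert, Finset.mem_singleton] at ht ⊢; tauto)
  · exact hsc.2.2 _ h1 _ (by intro t ht; simp only [Finset.mem_insert, Finset.mem_singleton] at ht ⊢; tauto)
  · exact hsc.2.2 _ h1 _ (by intro t ht; simp only [Finset.mem_insert, Finset.mem_singleton] at ht ⊢; tauto)
  · exact hsc.2.2 _ h1 _ (by intro t ht; simp only [Finset.mem_insert, Finset.mem_singleton] at ht ⊢; tauto)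
  · exact hsc.2.2 _ h1 _ (by intro t ht; simp only [Finset.mem_insert, Finset.mem_singleton] at ht ⊢; tauto)

lemma noP4_aux {H : NHypergraph} (hsc : IsSimplicialComplex H)
    (hfree : ¬ H.ContainsCopy F3) {a b x y z w : ℕ}
    (hab : a ≠ b) (hxy : x ≠ y) (hxz : x ≠ z) (hxw : x ≠ w) (hyz : y ≠ z) (hyw : y ≠ w)
    (hzw : z ≠ w) (hxa : x ∉ ({a, b} : Finset ℕ)) (hya : y ∉ ({a, b} : Finset ℕ))
    (hza : z ∉ ({a, b} : Finset ℕ)) (hwa : w ∉ ({a, b} : Finset ℕ))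
    (h1 : insert a (insert b {x, y}) ∈ H.edges)
    (h2 : insert a (insert b {y, z}) ∈ H.edges)
    (h3 : insert a (insert b {z, w}) ∈ H.edges) : False := by
  simp only [Finset.mem_insert, Finset.mem_singleton, not_or] at hxa hya hza hwa
  refine hfree (copy_of_F3 hsc (v1 := a) (v2 := y) (v3 := x) (v4 := b) (v5 := z) (v6 := w)
    ?_ ?_ ?_ ?_ ?_ ?_ ?_)
  · simp only [List.nodup_cons, List.mem_cons, List.not_mem_nil, List.nodup_nil, or_false,
      and_true, not_or]
    refine ⟨⟨?_,?_,?_,?_,?_⟩,⟨?_,?_,?_,?_⟩,⟨?_,?_,?_⟩,⟨?_,?_⟩,?_⟩ <;>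
      first
        | exact hab | exact hxy | exact hxz | exact hxw | exact hyz | exact hyw | exact hzw
        | exact ⟨hzw, not_false⟩
        | (intro hcontra; subst hcontra; tauto)
  · exact hsc.2.2 _ h1 _ (by intro t ht; simp only [Finset.mem_insert, Finset.mem_singleton] at ht ⊢; tauto)
  · exact hsc.2.2 _ h3 _ (by intro t ht; simp only [Finset.mem_insert, Finset.mem_singleton] at ht ⊢; tauto)
  · exact hsc.2.2 _ h1 _ (by intro t ht; simp only [Finset.mem_insert, Finset.mem_singleton] at ht ⊢; tauto)
  · exact hsc.2.2 _ h2 _ (by intro t ht; simp only [Finset.mem_insert, Finset.mem_singleton] at ht ⊢; tauto)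
  · exact hsc.2.2 _ h1 _ (by intro t ht; simp only [Finset.mem_insert, Finset.mem_singleton] at ht ⊢; tauto)
  · exact hsc.2.2 _ h2 _ (by intro t ht; simp only [Finset.mem_insert, Finset.mem_singleton] at ht ⊢; tauto)
lemma upper_bound {H : NHypergraph} {n : ℕ} (hsc : IsSimplicialComplex H)
    (hfree : ¬ H.ContainsCopy F3) (hn : H.verts.card = n) (hn2 : 2 ≤ n) :
    H.edges.card ≤ 4 * n ^ 3 := by
  classical
  set E4 := H.edges.filter (fun e => e.card = 4) with hE4
  set E5 := H.edges.filter (fun e => e.card = 5) with hE5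
  set Elow := H.edges.filter (fun e => e.card ≤ 3) with hElow
  have hE4n : E4.card ≤ n ^ 2 * n := by
    have hsub : E4 ⊆ (H.verts.powersetCard 2).biUnion
        (fun p => E4.filter (fun e => p ⊆ e)) := by
      intro e he
      have he4 : e.card = 4 := (Finset.mem_filter.mp he).2
      obtain ⟨p, hpe, hp2⟩ := Finset.exists_subset_card_eq (show 2 ≤ e.card by omega)
      refine Finset.mem_biUnion.mpr ⟨p, ?_, Finset.mem_filter.mpr ⟨he, hpe⟩⟩
      exact Finset.mem_powersetCard.mpr
        ⟨hpe.trans (H.subset_verts e (Finset.mem_filter.mp he).1), hp2⟩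
    calc E4.card ≤ _ := Finset.card_le_card hsub
      _ ≤ ∑ p ∈ H.verts.powersetCard 2, (E4.filter (fun e => p ⊆ e)).card :=
          Finset.card_biUnion_le
      _ ≤ ∑ _p ∈ H.verts.powersetCard 2, n := by
          apply Finset.sum_le_sum
          intro p hp
          obtain ⟨hpv, hp2⟩ := Finset.mem_powersetCard.mp hp
          obtain ⟨a, b, hab, rfl⟩ := Finset.card_eq_two.mp hp2
          set L := (E4.filter (fun e => ({a, b} : Finset ℕ) ⊆ e)).image (· \ ({a, b} : Finset ℕ))
            with hL
          have hinj : Set.InjOn (· \ ({a, b} : Finset ℕ))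
              ↑(E4.filter (fun e => ({a, b} : Finset ℕ) ⊆ e)) := by
            intro e1 he1 e2 he2 heq
            simp only [Finset.mem_coe, Finset.mem_filter] at he1 he2
            have heq' : e1 \ ({a, b} : Finset ℕ) = e2 \ ({a, b} : Finset ℕ) := heq
            have h1 := Finset.sdiff_union_of_subset he1.2
            have h2 := Finset.sdiff_union_of_subset he2.2
            rw [← h1, ← h2, heq']
          have hcard : (E4.filter (fun e => ({a, b} : Finset ℕ) ⊆ e)).card = L.card :=
            (Finset.card_image_of_injOn hinj).symm
          rw [hcard]
          have hL2 : ∀ l ∈ L, l.card = 2 := by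
            intro l hl
            obtain ⟨e, he, rfl⟩ := Finset.mem_image.mp hl
            simp only [Finset.mem_filter, hE4, Finset.mem_filter] at he
            rw [Finset.card_sdiff_of_subset he.2, he.1.2, hp2]
          have hnoP4 : ∀ x y z w : ℕ, x ≠ y → x ≠ z → x ≠ w → y ≠ z → y ≠ w → z ≠ w →
              {x, y} ∈ L → {y, z} ∈ L → {z, w} ∈ L → False := by
            intro x y z w hxy hxz hxw hyz hyw hzw hm1 hm2 hm3
            have hrec : ∀ u v : ℕ, ({u, v} : Finset ℕ) ∈ L →
                insert a (insert b {u, v}) ∈ H.edges ∧ u ∉ ({a, b} : Finset ℕ) ∧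
                  v ∉ ({a, b} : Finset ℕ) := by
              intro u v huv
              obtain ⟨e, he, hdiff⟩ := Finset.mem_image.mp huv
              simp only [Finset.mem_filter, hE4, Finset.mem_filter] at he
              have hu : u ∈ e \ ({a, b} : Finset ℕ) := by rw [hdiff]; simp
              have hv : v ∈ e \ ({a, b} : Finset ℕ) := by rw [hdiff]; simp
              rw [Finset.mem_sdiff] at hu hv
              have hee : e = insert a (insert b {u, v}) := by
                have h1 := Finset.sdiff_union_of_subset he.2
                rw [hdiff] at h1
                rw [← h1]
                ext t
                simp only [Finset.mem_union, Finset.mem_insert, Finset.mem_singleton]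
                tauto
              exact ⟨hee ▸ he.1.1, hu.2, hv.2⟩
            obtain ⟨he1, hx, hy⟩ := hrec x y hm1
            obtain ⟨he2, _, hz⟩ := hrec y z hm2
            obtain ⟨he3, _, hw⟩ := hrec z w hm3
            exact noP4_aux hsc hfree hab hxy hxz hxw hyz hyw hzw hx hy hz hw he1 he2 he3
          have := card_le_of_noP4 L hL2 hnoP4
          refine this.trans ?_
          have hsup : L.sup id ≤ H.verts := by
            apply Finset.sup_le
            intro l hl
            obtain ⟨e, he, rfl⟩ := Finset.mem_image.mp hl
            simp only [Finset.mem_filter, hE4, Finset.mem_filter] at he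
            exact Finset.le_iff_subset.mpr (Finset.sdiff_subset.trans (H.subset_verts e he.1.1))
          exact hn ▸ Finset.card_le_card (Finset.le_iff_subset.mp hsup)
      _ = (H.verts.powersetCard 2).card * n := by rw [Finset.sum_const, smul_eq_mul]
      _ ≤ n ^ 2 * n := by
          rw [Finset.card_powersetCard, hn]
          exact Nat.mul_le_mul_right _ (Nat.choose_le_pow n 2)
  have hE5n : E5.card ≤ E4.card := by
    apply Finset.card_le_card_of_injOn (fun e => e.erase (pickMax e))
    · intro e he
      simp only [Finset.mem_coe, hE5, Finset.mem_filter] at he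
      have hne : e.Nonempty := Finset.card_pos.mp (by omega)
      simp only [Finset.mem_coe, hE4, Finset.mem_filter]
      constructor
      · exact hsc.2.2 e he.1 _ (Finset.erase_subset _ _)
      · rw [Finset.card_erase_of_mem (pickMax_mem hne), he.2]
    · intro e1 he1 e2 he2 heq
      have heq' : e1.erase (pickMax e1) = e2.erase (pickMax e2) := heq
      simp only [Finset.mem_coe, hE5, Finset.mem_filter] at he1 he2
      by_contra hne
      have hne1 : e1.Nonempty := Finset.card_pos.mp (by omega)
      have hne2 : e2.Nonempty := Finset.card_pos.mp (by omega)
      have hm1 : pickMax e1 ∈ e1 := pickMax_mem hne1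
      have hm2 : pickMax e2 ∈ e2 := pickMax_mem hne2
      have hq1 : insert (pickMax e1) (e1.erase (pickMax e1)) = e1 := Finset.insert_erase hm1
      have hq2 : insert (pickMax e2) (e2.erase (pickMax e2)) = e2 := Finset.insert_erase hm2
      have hmm : pickMax e1 ≠ pickMax e2 := by
        intro h
        exact hne (by rw [← hq1, ← hq2, heq', h])
      refine no_two_five hsc hfree (q := e1.erase (pickMax e1))
        (by rw [Finset.card_erase_of_mem hm1, he1.2])
        (Finset.notMem_erase _ _) ?_ hmm (by rw [hq1]; exact he1.1) ?_
      · rw [heq']; exact Finset.notMem_erase _ _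
      · rw [heq', hq2]; exact he2.1
  have hlown : Elow.card ≤ 1 + n + n ^ 2 + n ^ 3 := by
    have hsub : Elow ⊆ (Finset.range 4).biUnion (fun r => H.verts.powersetCard r) := by
      intro e he
      simp only [hElow, Finset.mem_filter] at he
      exact Finset.mem_biUnion.mpr ⟨e.card, Finset.mem_range.mpr (by omega),
        Finset.mem_powersetCard.mpr ⟨H.subset_verts e he.1, rfl⟩⟩
    refine (Finset.card_le_card hsub).trans ?_
    refine Finset.card_biUnion_le.trans ?_
    have : ∀ r, (H.verts.powersetCard r).card = n.choose r := by
      intro r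
      rw [Finset.card_powersetCard, hn]
    rw [Finset.sum_range_succ, Finset.sum_range_succ, Finset.sum_range_succ,
      Finset.sum_range_one, this, this, this, this]
    have c0 : n.choose 0 = 1 := Nat.choose_zero_right n
    have c1 : n.choose 1 = n := Nat.choose_one_right n
    have c2 : n.choose 2 ≤ n ^ 2 := Nat.choose_le_pow n 2
    have c3 : n.choose 3 ≤ n ^ 3 := Nat.choose_le_pow n 3
    omega
  have hsplit : H.edges ⊆ Elow ∪ E4 ∪ E5 := by
    intro e he
    have h5 := card_le_five hsc hfree e he
    simp only [Finset.mem_union, hElow, hE4, hE5, Finset.mem_filter]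
    rcases Nat.lt_or_ge e.card 4 with h | h
    · exact Or.inl (Or.inl ⟨he, by omega⟩)
    · rcases (by omega : e.card = 4 ∨ e.card = 5) with h4 | h4
      · exact Or.inl (Or.inr ⟨he, h4⟩)
      · exact Or.inr ⟨he, h4⟩
  have htot : H.edges.card ≤ Elow.card + E4.card + E5.card := by
    refine (Finset.card_le_card hsplit).trans ?_
    refine (Finset.card_union_le _ _).trans ?_
    exact Nat.add_le_add_right (Finset.card_union_le _ _) _
  have hcube : 1 + n + n ^ 2 ≤ n ^ 3 := by nlinarith
  have h43 : n ^ 2 * n = n ^ 3 := by ring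
  have he4' : E4.card ≤ n ^ 3 := h43 ▸ hE4n
  have he5' : E5.card ≤ n ^ 3 := hE5n.trans he4'
  calc H.edges.card ≤ Elow.card + E4.card + E5.card := htot
    _ ≤ (1 + n + n ^ 2 + n ^ 3) + n ^ 3 + n ^ 3 := by
        exact Nat.add_le_add (Nat.add_le_add hlown he4') he5'
    _ ≤ 4 * n ^ 3 := by nlinarith
def tripartite (n : ℕ) : NHypergraph where
  verts := Finset.range n
  edges := (Finset.range n).powerset.filter
    (fun e => e.card ≤ 3 ∧ ∀ x ∈ e, ∀ y ∈ e, x % 3 = y % 3 → x = y)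
  subset_verts := fun e he => Finset.mem_powerset.mp (Finset.mem_filter.mp he).1

lemma tripartite_sc (n : ℕ) : IsSimplicialComplex (tripartite n) := by
  refine ⟨?_, ?_, ?_⟩
  · simp [tripartite]
  · intro v hv
    simp only [tripartite, Finset.mem_filter, Finset.mem_powerset]
    refine ⟨Finset.singleton_subset_iff.mpr hv, by simp, ?_⟩
    intro x hx y hy _
    rw [Finset.mem_singleton] at hx hy
    rw [hx, hy]
  · intro e he e' he'
    simp only [tripartite, Finset.mem_filter, Finset.mem_powerset] at he ⊢
    exact ⟨he'.trans he.1, (Finset.card_le_card he').trans he.2.1,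
      fun x hx y hy => he.2.2 x (he' hx) y (he' hy)⟩

lemma mem_F3_edges_123 : ({1, 2, 3} : Finset ℕ) ∈ F3.edges := by decide
lemma mem_F3_edges_456 : ({4, 5, 6} : Finset ℕ) ∈ F3.edges := by decide
lemma mem_F3_edges_14 : ({1, 4} : Finset ℕ) ∈ F3.edges := by decide
lemma mem_F3_edges_15 : ({1, 5} : Finset ℕ) ∈ F3.edges := by decide
lemma mem_F3_edges_24 : ({2, 4} : Finset ℕ) ∈ F3.edges := by decide
lemma mem_F3_edges_25 : ({2, 5} : Finset ℕ) ∈ F3.edges := by decide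

lemma tripartite_free (n : ℕ) : ¬ (tripartite n).ContainsCopy F3 := by
  rintro ⟨f, hinj, _hv, he⟩
  have hne : ∀ i j : ℕ, i ∈ F3.verts → j ∈ F3.verts → i ≠ j → f i ≠ f j := by
    intro i j hi hj hij h
    exact hij (hinj (Finset.mem_coe.mpr hi) (Finset.mem_coe.mpr hj) h)
  have hv16 : ∀ i : ℕ, 1 ≤ i → i ≤ 6 → i ∈ F3.verts := by decide
  have key : ∀ i j : ℕ, 1 ≤ i → i ≤ 6 → 1 ≤ j → j ≤ 6 → i ≠ j →
      ∀ S ∈ F3.edges, f i ∈ S.image f → f j ∈ S.image f → f i % 3 ≠ f j % 3 := by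
    intro i j hi1 hi6 hj1 hj6 hij S hS hfi hfj
    have hSe := he S hS
    simp only [tripartite, Finset.mem_filter] at hSe
    intro hmod
    exact hne i j (hv16 i hi1 hi6) (hv16 j hj1 hj6) hij (hSe.2.2 _ hfi _ hfj hmod)
  have him : ∀ i : ℕ, ∀ S : Finset ℕ, i ∈ S → f i ∈ S.image f :=
    fun i S hi => Finset.mem_image_of_mem f hi
  have h12 : f 1 % 3 ≠ f 2 % 3 := key 1 2 (by norm_num) (by norm_num) (by norm_num)
    (by norm_num) (by norm_num) _ mem_F3_edges_123 (him 1 _ (by simp)) (him 2 _ (by simp))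
  have h45 : f 4 % 3 ≠ f 5 % 3 := key 4 5 (by norm_num) (by norm_num) (by norm_num)
    (by norm_num) (by norm_num) _ mem_F3_edges_456 (him 4 _ (by simp)) (him 5 _ (by simp))
  have h14 : f 1 % 3 ≠ f 4 % 3 := key 1 4 (by norm_num) (by norm_num) (by norm_num)
    (by norm_num) (by norm_num) _ mem_F3_edges_14 (him 1 _ (by simp)) (him 4 _ (by simp))
  have h15 : f 1 % 3 ≠ f 5 % 3 := key 1 5 (by norm_num) (by norm_num) (by norm_num)
    (by norm_num) (by norm_num) _ mem_F3_edges_15 (him 1 _ (by simp)) (him 5 _ (by simp))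
  have h24 : f 2 % 3 ≠ f 4 % 3 := key 2 4 (by norm_num) (by norm_num) (by norm_num)
    (by norm_num) (by norm_num) _ mem_F3_edges_24 (him 2 _ (by simp)) (him 4 _ (by simp))
  have h25 : f 2 % 3 ≠ f 5 % 3 := key 2 5 (by norm_num) (by norm_num) (by norm_num)
    (by norm_num) (by norm_num) _ mem_F3_edges_25 (him 2 _ (by simp)) (him 5 _ (by simp))
  omega

lemma tripartite_card (n : ℕ) : (n / 3) ^ 3 ≤ (tripartite n).edges.card := by
  classical
  set m := n / 3 with hm
  have h3m : 3 * m ≤ n := by omega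
  set cube := (Finset.range m) ×ˢ ((Finset.range m) ×ˢ (Finset.range m)) with hcube
  have hcc : cube.card = m ^ 3 := by
    simp only [hcube, Finset.card_product, Finset.card_range]
    ring
  rw [← hcc]
  apply Finset.card_le_card_of_injOn (fun p => ({3 * p.1, 3 * p.2.1 + 1, 3 * p.2.2 + 2} : Finset ℕ))
  · rintro ⟨i, j, k⟩ hp
    simp only [Finset.mem_coe, hcube, Finset.mem_product, Finset.mem_range] at hp
    obtain ⟨hi, hj, hk⟩ := hp
    simp only [Finset.mem_coe, tripartite, Finset.mem_filter, Finset.mem_powerset]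
    refine ⟨?_, ?_, ?_⟩
    · intro x hx
      simp only [Finset.mem_insert, Finset.mem_singleton] at hx
      rw [Finset.mem_range]
      rcases hx with rfl | rfl | rfl <;> omega
    · refine le_trans (Finset.card_insert_le _ _) (Nat.succ_le_succ ?_)
      refine le_trans (Finset.card_insert_le _ _) (Nat.succ_le_succ ?_)
      simp
    · intro x hx y hy hmod
      simp only [Finset.mem_insert, Finset.mem_singleton] at hx hy
      rcases hx with rfl | rfl | rfl <;> rcases hy with rfl | rfl | rfl <;> omega
  · rintro ⟨i, j, k⟩ hp ⟨i', j', k'⟩ hq heq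
    simp only [Finset.mem_coe, hcube, Finset.mem_product, Finset.mem_range] at hp hq
    have heq' : ({3 * i, 3 * j + 1, 3 * k + 2} : Finset ℕ)
        = ({3 * i', 3 * j' + 1, 3 * k' + 2} : Finset ℕ) := heq
    have h1 : (3 * i : ℕ) ∈ ({3 * i', 3 * j' + 1, 3 * k' + 2} : Finset ℕ) := by
      rw [← heq']; simp
    have h2 : (3 * j + 1 : ℕ) ∈ ({3 * i', 3 * j' + 1, 3 * k' + 2} : Finset ℕ) := by
      rw [← heq']; simp
    have h3 : (3 * k + 2 : ℕ) ∈ ({3 * i', 3 * j' + 1, 3 * k' + 2} : Finset ℕ) := by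
      rw [← heq']; simp
    simp only [Finset.mem_insert, Finset.mem_singleton] at h1 h2 h3
    have : i = i' := by omega
    have : j = j' := by omega
    have : k = k' := by omega
    simp_all

lemma edges_bdd (H : NHypergraph) : H.edges.card ≤ 2 ^ H.verts.card := by
  calc H.edges.card ≤ H.verts.powerset.card :=
        Finset.card_le_card (fun e he => Finset.mem_powerset.mpr (H.subset_verts e he))
    _ = 2 ^ H.verts.card := Finset.card_powerset _

lemma exSC_lower (n : ℕ) : (n / 3) ^ 3 ≤ exSC n F3 := by
  have hmem : (tripartite n).edges.card ∈ {m | ∃ H : NHypergraph, IsSimplicialComplex H ∧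
      H.verts.card = n ∧ ¬ H.ContainsCopy F3 ∧ H.edges.card = m} :=
    ⟨tripartite n, tripartite_sc n, by simp [tripartite], tripartite_free n, rfl⟩
  have hbdd : BddAbove {m | ∃ H : NHypergraph, IsSimplicialComplex H ∧
      H.verts.card = n ∧ ¬ H.ContainsCopy F3 ∧ H.edges.card = m} := by
    refine ⟨2 ^ n, ?_⟩
    rintro m ⟨H, _, hcard, _, rfl⟩
    exact hcard ▸ edges_bdd H
  exact le_trans (tripartite_card n) (le_csSup hbdd hmem)

lemma exSC_upper {n : ℕ} (hn2 : 2 ≤ n) : exSC n F3 ≤ 4 * n ^ 3 := by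
  apply csSup_le
  · exact ⟨(tripartite n).edges.card, tripartite n, tripartite_sc n, by simp [tripartite],
      tripartite_free n, rfl⟩
  · rintro m ⟨H, hsc, hcard, hfree, rfl⟩
    exact upper_bound hsc hfree hcard hn2
lemma layer_mem_123 : ({1, 2, 3} : Finset ℕ) ∈ (F3.layer 3).edges := by decide

lemma cliquePlus_bound {G : NHypergraph} {n : ℕ} (hu : G.IsUniform 3) (hv : G.verts.card = n)
    (hfree : ¬ G.ContainsCopy (F3.layer 3)) :
    G.cliquePlusCount 3 ≤ 32 * n ^ 2 + 32 * n + 32 := by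
  classical
  have h2disj : ∀ e1 ∈ G.edges, ∀ e2 ∈ G.edges, Disjoint e1 e2 → False := by
    intro e1 h1 e2 h2 hd
    exact hfree (copy_of_M2 h1 h2 (hu _ h1) (hu _ h2) hd)
  set cliquesF := G.verts.powerset.filter (fun T => G.IsCliqueIn 3 T ∧ 3 ≤ T.card) with hcf
  have hcount : G.cliquePlusCount 3 = cliquesF.card := by
    unfold NHypergraph.cliquePlusCount
    rw [show {T : Finset ℕ | G.IsCliqueIn 3 T ∧ 3 ≤ T.card} = ↑cliquesF by
      ext T
      simp only [hcf, Set.mem_setOf_eq, Finset.coe_filter, Finset.mem_powerset]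
      exact ⟨fun h => ⟨h.1.1, h⟩, fun h => h.2⟩]
    exact Set.ncard_coe_finset _
  rw [hcount]
  have hK : ∀ T ∈ cliquesF, 4 ≤ T.card → ∀ S ∈ T.powersetCard 3, S ∈ G.edges := by
    intro T hT hT4 S hS
    obtain ⟨_, ⟨_, hcl⟩, _⟩ := Finset.mem_filter.mp hT
    rcases hcl with h1 | ⟨e, he, hTe⟩ | h3
    · omega
    · have := Finset.card_le_card hTe
      rw [hu e he] at this
      omega
    · exact h3 S hS
  have hC3 : ∀ T ∈ cliquesF, T.card = 3 → T ∈ G.edges := by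
    intro T hT h3
    obtain ⟨_, ⟨_, hcl⟩, _⟩ := Finset.mem_filter.mp hT
    rcases hcl with h1 | ⟨e, he, hTe⟩ | hall
    · omega
    · have hle := Finset.card_le_card hTe
      rw [hu e he] at hle
      rwa [Finset.eq_of_subset_of_card_le hTe (by rw [hu e he, h3] : e.card ≤ T.card)]
    · exact hall T (Finset.mem_powersetCard.mpr ⟨Finset.Subset.refl T, h3⟩)
  have hdisjsub : ∀ (A : Finset ℕ) (e : Finset ℕ), e ∈ G.edges → 3 ≤ (A \ e).card →
      (∀ S ∈ A.powersetCard 3, S ∈ G.edges) → False := by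
    intro A e he hA hall
    obtain ⟨S, hSsub, hS3⟩ := Finset.exists_subset_card_eq hA
    have hSA : S ∈ A.powersetCard 3 :=
      Finset.mem_powersetCard.mpr ⟨hSsub.trans (Finset.sdiff_subset), hS3⟩
    refine h2disj S (hall S hSA) e he ?_
    rw [Finset.disjoint_left]
    intro x hx
    exact (Finset.mem_sdiff.mp (hSsub hx)).2
  have hcard5 : ∀ T ∈ cliquesF, T.card ≤ 5 := by
    intro T hT
    by_contra hc
    push_neg at hc
    obtain ⟨S6, hS6sub, hS6⟩ := Finset.exists_subset_card_eq (show 6 ≤ T.card by omega)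
    obtain ⟨S3, hS3sub, hS3⟩ := Finset.exists_subset_card_eq (show 3 ≤ S6.card by omega)
    have hK' := hK T hT (by omega)
    have hS3e : S3 ∈ G.edges := hK' S3
      (Finset.mem_powersetCard.mpr ⟨hS3sub.trans hS6sub, hS3⟩)
    have hSd : (S6 \ S3).card = 3 := by
      rw [Finset.card_sdiff_of_subset hS3sub, hS6, hS3]
    have hSde : S6 \ S3 ∈ G.edges := hK' _
      (Finset.mem_powersetCard.mpr ⟨Finset.sdiff_subset.trans hS6sub, hSd⟩)
    exact h2disj S3 hS3e (S6 \ S3) hSde (Finset.disjoint_sdiff)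
  set C3 := cliquesF.filter (fun T => T.card = 3) with hC3d
  set C4 := cliquesF.filter (fun T => T.card = 4) with hC4d
  set C5 := cliquesF.filter (fun T => T.card = 5) with hC5d
  have hsplit : cliquesF.card ≤ C3.card + C4.card + C5.card := by
    refine le_trans (Finset.card_le_card (show cliquesF ⊆ C3 ∪ C4 ∪ C5 from ?_)) ?_
    · intro T hT
      have h5 := hcard5 T hT
      have h3 : 3 ≤ T.card := (Finset.mem_filter.mp hT).2.2
      simp only [Finset.mem_union, hC3d, hC4d, hC5d, Finset.mem_filter]
      rcases (by omega : T.card = 3 ∨ T.card = 4 ∨ T.card = 5) with h | h | h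
      · exact Or.inl (Or.inl ⟨hT, h⟩)
      · exact Or.inl (Or.inr ⟨hT, h⟩)
      · exact Or.inr ⟨hT, h⟩
    · exact le_trans (Finset.card_union_le _ _)
        (Nat.add_le_add_right (Finset.card_union_le _ _) _)
  have hC3card : C3.card ≤ G.edges.card := by
    apply Finset.card_le_card
    intro T hT
    obtain ⟨hT, h3⟩ := Finset.mem_filter.mp hT
    exact hC3 T hT h3
  have hC4card : C4.card ≤ G.edges.card * n := by
    have hsub : C4 ⊆ G.edges.biUnion (fun e => G.verts.image (fun v => insert v e)) := by
      intro T hT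
      obtain ⟨hT, h4⟩ := Finset.mem_filter.mp hT
      have hTv : T ⊆ G.verts := Finset.mem_powerset.mp (Finset.mem_filter.mp hT).1
      have hne : T.Nonempty := Finset.card_pos.mp (by omega)
      have hm : pickMax T ∈ T := pickMax_mem hne
      have he3 : (T.erase (pickMax T)).card = 3 := by
        rw [Finset.card_erase_of_mem hm, h4]
      have hee : T.erase (pickMax T) ∈ G.edges := hK T hT (by omega) _
        (Finset.mem_powersetCard.mpr ⟨Finset.erase_subset _ _, he3⟩)
      refine Finset.mem_biUnion.mpr ⟨_, hee, Finset.mem_image.mpr ⟨pickMax T, hTv hm, ?_⟩⟩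
      exact Finset.insert_erase hm
    refine le_trans (Finset.card_le_card hsub) (le_trans Finset.card_biUnion_le ?_)
    calc ∑ e ∈ G.edges, (G.verts.image (fun v => insert v e)).card
        ≤ ∑ _e ∈ G.edges, n :=
          Finset.sum_le_sum (fun e _ => le_trans Finset.card_image_le (le_of_eq hv))
      _ = G.edges.card * n := by rw [Finset.sum_const, smul_eq_mul]
  have hC5card : C5.card ≤ G.edges.card * (n * n) := by
    have hsub : C5 ⊆ G.edges.biUnion
        (fun e => (G.verts ×ˢ G.verts).image (fun q => insert q.1 (insert q.2 e))) := by
      intro T hT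
      obtain ⟨hT, h5⟩ := Finset.mem_filter.mp hT
      have hTv : T ⊆ G.verts := Finset.mem_powerset.mp (Finset.mem_filter.mp hT).1
      have hne : T.Nonempty := Finset.card_pos.mp (by omega)
      have hm1 : pickMax T ∈ T := pickMax_mem hne
      set T4 := T.erase (pickMax T) with hT4d
      have h4 : T4.card = 4 := by rw [hT4d, Finset.card_erase_of_mem hm1, h5]
      have hne4 : T4.Nonempty := Finset.card_pos.mp (by omega)
      have hm2 : pickMax T4 ∈ T4 := pickMax_mem hne4
      set e := T4.erase (pickMax T4) with hed
      have he3 : e.card = 3 := by rw [hed, Finset.card_erase_of_mem hm2, h4]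
      have hesub : e ⊆ T := by
        rw [hed, hT4d]
        exact (Finset.erase_subset _ _).trans (Finset.erase_subset _ _)
      have hee : e ∈ G.edges := hK T hT (by omega) _
        (Finset.mem_powersetCard.mpr ⟨hesub, he3⟩)
      refine Finset.mem_biUnion.mpr ⟨e, hee, Finset.mem_image.mpr
        ⟨(pickMax T, pickMax T4), ?_, ?_⟩⟩
      · exact Finset.mem_product.mpr ⟨hTv hm1, hTv ((Finset.erase_subset _ _) hm2)⟩
      · show insert (pickMax T) (insert (pickMax T4) e) = T
        rw [hed, Finset.insert_erase hm2, hT4d, Finset.insert_erase hm1]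
    refine le_trans (Finset.card_le_card hsub) (le_trans Finset.card_biUnion_le ?_)
    calc ∑ e ∈ G.edges, ((G.verts ×ˢ G.verts).image (fun q => insert q.1 (insert q.2 e))).card
        ≤ ∑ _e ∈ G.edges, n * n :=
          Finset.sum_le_sum (fun e _ => le_trans Finset.card_image_le
            (le_of_eq (by rw [Finset.card_product, hv])))
      _ = G.edges.card * (n * n) := by rw [Finset.sum_const, smul_eq_mul]
  by_cases hK5 : ∃ T : Finset ℕ, T.card = 5 ∧ ∀ S ∈ T.powersetCard 3, S ∈ G.edges
  · -- K5 exists: all edges inside T₁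
    obtain ⟨T1, hT1c, hT1all⟩ := hK5
    have hEsub : G.edges ⊆ T1.powerset := by
      intro e he
      rw [Finset.mem_powerset]
      by_contra hns
      have hint : (T1 ∩ e).card ≤ 2 := by
        by_contra hgt
        push_neg at hgt
        have := Finset.eq_of_subset_of_card_le (Finset.inter_subset_right : T1 ∩ e ⊆ e)
          (by rw [hu e he]; omega)
        exact hns (by rw [← this]; exact Finset.inter_subset_left)
      have hsd : 3 ≤ (T1 \ e).card := by
        have := Finset.card_sdiff_add_card_inter T1 e
        omega
      exact hdisjsub T1 e he hsd hT1all
    have hE : G.edges.card ≤ 32 := by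
      refine le_trans (Finset.card_le_card hEsub) ?_
      rw [Finset.card_powerset, hT1c]
      norm_num
    have := hsplit
    have h3 := hC3card.trans hE
    have h4 := hC4card.trans (Nat.mul_le_mul_right n hE)
    have h5 := hC5card.trans (Nat.mul_le_mul_right (n * n) hE)
    nlinarith
  by_cases hK4 : ∃ T : Finset ℕ, T.card = 4 ∧ ∀ S ∈ T.powersetCard 3, S ∈ G.edges
  · -- K4 exists, no K5: edges meet T₀ in ≥ 2
    obtain ⟨T0, hT0c, hT0all⟩ := hK4
    have hmeet : ∀ e ∈ G.edges, 2 ≤ (T0 ∩ e).card := by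
      intro e he
      by_contra hlt
      push_neg at hlt
      have hsd : 3 ≤ (T0 \ e).card := by
        have := Finset.card_sdiff_add_card_inter T0 e
        omega
      exact hdisjsub T0 e he hsd hT0all
    have hE : G.edges.card ≤ 6 * n := by
      have hsub : G.edges ⊆ (T0.powersetCard 2).biUnion (fun p => G.edges.filter (p ⊆ ·)) := by
        intro e he
        obtain ⟨p, hpsub, hp2⟩ := Finset.exists_subset_card_eq (hmeet e he)
        refine Finset.mem_biUnion.mpr ⟨p, Finset.mem_powersetCard.mpr
          ⟨hpsub.trans Finset.inter_subset_left, hp2⟩,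
          Finset.mem_filter.mpr ⟨he, hpsub.trans Finset.inter_subset_right⟩⟩
      refine le_trans (Finset.card_le_card hsub) (le_trans Finset.card_biUnion_le ?_)
      have hper : ∀ p ∈ T0.powersetCard 2, (G.edges.filter (p ⊆ ·)).card ≤ n := by
        intro p hp
        obtain ⟨hpT, hp2⟩ := Finset.mem_powersetCard.mp hp
        have hinj : Set.InjOn (· \ p) ↑(G.edges.filter (p ⊆ ·)) := by
          intro e1 he1 e2 he2 heq
          have heq' : e1 \ p = e2 \ p := heq
          simp only [Finset.mem_coe, Finset.mem_filter] at he1 he2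
          rw [← Finset.sdiff_union_of_subset he1.2, ← Finset.sdiff_union_of_subset he2.2, heq']
        calc (G.edges.filter (p ⊆ ·)).card
            = ((G.edges.filter (p ⊆ ·)).image (· \ p)).card :=
              (Finset.card_image_of_injOn hinj).symm
          _ ≤ (G.verts.powersetCard 1).card := by
              apply Finset.card_le_card
              intro l hl
              obtain ⟨e, he, rfl⟩ := Finset.mem_image.mp hl
              obtain ⟨hee, hpe⟩ := Finset.mem_filter.mp he
              refine Finset.mem_powersetCard.mpr
                ⟨Finset.sdiff_subset.trans (G.subset_verts e hee), ?_⟩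
              rw [Finset.card_sdiff_of_subset hpe, hu e hee, hp2]
          _ ≤ n := by rw [Finset.card_powersetCard, hv]; exact Nat.choose_le_pow n 1 |>.trans (by simp)
      refine le_trans (Finset.sum_le_sum hper) ?_
      rw [Finset.sum_const, smul_eq_mul, Finset.card_powersetCard, hT0c]
      norm_num [Nat.choose]
    have hC5e : C5 = ∅ := by
      rw [Finset.eq_empty_iff_forall_notMem]
      intro T hT
      obtain ⟨hTc, h5⟩ := Finset.mem_filter.mp hT
      exact hK5 ⟨T, h5, hK T hTc (by omega)⟩
    have h3 := hC3card.trans hE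
    have h4 := hC4card.trans (Nat.mul_le_mul_right n hE)
    have h5 : C5.card = 0 := by rw [hC5e]; rfl
    nlinarith [hsplit]
  · -- no K4: only 3-cliques
    have hC4e : C4 = ∅ := by
      rw [Finset.eq_empty_iff_forall_notMem]
      intro T hT
      obtain ⟨hTc, h4⟩ := Finset.mem_filter.mp hT
      exact hK4 ⟨T, h4, hK T hTc (by omega)⟩
    have hC5e : C5 = ∅ := by
      rw [Finset.eq_empty_iff_forall_notMem]
      intro T hT
      obtain ⟨hTc, h5⟩ := Finset.mem_filter.mp hT
      obtain ⟨S4, hS4sub, hS4⟩ := Finset.exists_subset_card_eq (show 4 ≤ T.card by omega)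
      refine hK4 ⟨S4, hS4, ?_⟩
      intro S hS
      obtain ⟨hSsub, hS3⟩ := Finset.mem_powersetCard.mp hS
      exact hK T hTc (by omega) S (Finset.mem_powersetCard.mpr ⟨hSsub.trans hS4sub, hS3⟩)
    have hE : G.edges.card ≤ 3 * n ^ 2 := by
      rcases Finset.eq_empty_or_nonempty G.edges with he | ⟨e0, he0⟩
      · rw [he]; simp
      have hsub : G.edges ⊆ e0.biUnion (fun v => G.edges.filter (v ∈ ·)) := by
        intro e he
        have hnd : ¬ Disjoint e0 e := fun hd => h2disj e0 he0 e he hd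
        obtain ⟨v, hv0, hve⟩ := Finset.not_disjoint_iff.mp hnd
        exact Finset.mem_biUnion.mpr ⟨v, hv0, Finset.mem_filter.mpr ⟨he, hve⟩⟩
      refine le_trans (Finset.card_le_card hsub) (le_trans Finset.card_biUnion_le ?_)
      have hper : ∀ v ∈ e0, (G.edges.filter (v ∈ ·)).card ≤ n ^ 2 := by
        intro v hv0
        have hinj : Set.InjOn (fun e : Finset ℕ => e.erase v) ↑(G.edges.filter (v ∈ ·)) := by
          intro e1 he1 e2 he2 heq
          have heq' : e1.erase v = e2.erase v := heq
          simp only [Finset.mem_coe, Finset.mem_filter] at he1 he2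
          rw [← Finset.insert_erase he1.2, ← Finset.insert_erase he2.2, heq']
        calc (G.edges.filter (v ∈ ·)).card
            = ((G.edges.filter (v ∈ ·)).image (fun e : Finset ℕ => e.erase v)).card :=
              (Finset.card_image_of_injOn hinj).symm
          _ ≤ (G.verts.powersetCard 2).card := by
              apply Finset.card_le_card
              intro l hl
              obtain ⟨e, he, rfl⟩ := Finset.mem_image.mp hl
              obtain ⟨hee, hve⟩ := Finset.mem_filter.mp he
              refine Finset.mem_powersetCard.mpr
                ⟨(Finset.erase_subset _ _).trans (G.subset_verts e hee), ?_⟩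
              rw [Finset.card_erase_of_mem hve, hu e hee]
          _ ≤ n ^ 2 := by rw [Finset.card_powersetCard, hv]; exact Nat.choose_le_pow n 2
      refine le_trans (Finset.sum_le_sum hper) ?_
      rw [Finset.sum_const, smul_eq_mul, hu e0 he0]
    have h3 := hC3card.trans hE
    have h4 : C4.card = 0 := by rw [hC4e]; rfl
    have h5 : C5.card = 0 := by rw [hC5e]; rfl
    nlinarith [hsplit]
def emptyHG (n : ℕ) : NHypergraph where
  verts := Finset.range n
  edges := ∅
  subset_verts := fun e he => absurd he (Finset.notMem_empty e)

lemma exClPlus_bound (n : ℕ) : exClPlus 3 n {F3.layer 3} ≤ 32 * n ^ 2 + 32 * n + 32 := by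
  apply csSup_le
  · refine ⟨(emptyHG n).cliquePlusCount 3, emptyHG n,
      fun e he => absurd he (Finset.notMem_empty e), by simp [emptyHG], ?_, rfl⟩
    intro H hH
    rw [Set.mem_singleton_iff] at hH
    subst hH
    rintro ⟨f, _, _, hedge⟩
    exact absurd (hedge _ layer_mem_123) (Finset.notMem_empty _)
  · rintro m ⟨G, hu, hv, hHF, rfl⟩
    exact cliquePlus_bound hu hv (hHF _ rfl)

lemma main_nontrivial : ¬ IsTrivialSC 3 F3 := by
  intro h
  unfold IsTrivialSC at h
  obtain ⟨n, hn, hge⟩ := (h.and (Filter.eventually_ge_atTop 1300)).exists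
  have hlow := exSC_lower n
  rw [hn] at hlow
  have hsum : ∑ r ∈ Finset.range 3, n.choose r ≤ 1 + n + n ^ 2 := by
    rw [Finset.sum_range_succ, Finset.sum_range_succ, Finset.sum_range_one]
    have h2 := Nat.choose_le_pow n 2
    rw [Nat.choose_zero_right, Nat.choose_one_right]
    omega
  have hcl := exClPlus_bound n
  set k := n / 3 with hk
  have hkn : n ≤ 3 * k + 2 := by omega
  have hk433 : 433 ≤ k := by omega
  have h2 : k ^ 3 ≤ 33 * n ^ 2 + 33 * n + 33 := by
    calc k ^ 3 ≤ exClPlus 3 n {F3.layer 3} + ∑ r ∈ Finset.range 3, n.choose r := hlow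
      _ ≤ (32 * n ^ 2 + 32 * n + 32) + (1 + n + n ^ 2) := Nat.add_le_add hcl hsum
      _ ≤ 33 * n ^ 2 + 33 * n + 33 := by omega
  have h1 : n ^ 2 ≤ (3 * k + 2) ^ 2 := Nat.pow_le_pow_left hkn 2
  have h1' : n ^ 2 ≤ 9 * k ^ 2 + 12 * k + 4 := by
    refine h1.trans (le_of_eq ?_)
    ring
  have h3 : 433 * k ^ 2 ≤ k ^ 3 := by
    calc 433 * k ^ 2 ≤ k * k ^ 2 := Nat.mul_le_mul_right _ hk433
      _ = k ^ 3 := by ring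
  have h4 : 433 * k ≤ k ^ 2 := by
    calc 433 * k ≤ k * k := Nat.mul_le_mul_right _ hk433
      _ = k ^ 2 := by ring
  linarith

set_option maxHeartbeats 1000000 in
theorem F3_nontrivial :
    ¬ IsTrivialSC 3
        (genComplex {({1,2,3} : Finset ℕ), {4,5,6}, {1,4}, {1,5}, {2,4}, {2,5}}) ∧
      ∃ c C : ℝ, 0 < c ∧ 0 < C ∧ ∀ᶠ n : ℕ in Filter.atTop,
        c * (n : ℝ) ^ 3 ≤
            (exSC n (genComplex {({1,2,3} : Finset ℕ), {4,5,6}, {1,4}, {1,5}, {2,4}, {2,5}}) : ℝ) ∧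
          (exSC n (genComplex {({1,2,3} : Finset ℕ), {4,5,6}, {1,4}, {1,5}, {2,4}, {2,5}}) : ℝ) ≤
            C * (n : ℝ) ^ 3 := by
  have hF : genComplex {({1,2,3} : Finset ℕ), {4,5,6}, {1,4}, {1,5}, {2,4}, {2,5}} = F3 := rfl
  rw [hF]
  constructor
  · exact main_nontrivial
  · refine ⟨1/64, 4, by norm_num, by norm_num, ?_⟩
    filter_upwards [Filter.eventually_ge_atTop 6] with n hn
    have hlow := exSC_lower n
    have hup := exSC_upper (show 2 ≤ n by omega)
    constructor
    · have hk : n ≤ 4 * (n / 3) := by omega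
      have hcast : ((n : ℕ) : ℝ) ≤ 4 * ((n / 3 : ℕ) : ℝ) := by exact_mod_cast hk
      have h3 : (n : ℝ) ^ 3 ≤ (4 * ((n / 3 : ℕ) : ℝ)) ^ 3 :=
        pow_le_pow_left₀ (by positivity) hcast 3
      have hcast2 : (((n / 3) ^ 3 : ℕ) : ℝ) ≤ (exSC n F3 : ℝ) := Nat.cast_le.mpr hlow
      push_cast at hcast2
      nlinarith [h3, hcast2]
    · have hcast : (exSC n F3 : ℝ) ≤ ((4 * n ^ 3 : ℕ) : ℝ) := Nat.cast_le.mpr hup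
      push_cast at hcast
      linarith
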